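/- arXiv:1504.01068 — 2 statements merged into one kernel-verified Lean document; each statement's English description precedes it below -/
import Mathlib

section
/- Let 1 → Ḡ → G →(p) Γ → 1 be an exact sequence of profinite groups, i.e. p : G → Γ is a continuous surjective group homomorphism of profinite groups with kernel Ḡ, and let φ : G → G be a continuous group automorphism satisfying p ∘ φ = p. Assume that for every open subgroup Γ' of Γ the automorphism of p⁻¹(Γ') induced by φ is class-preserving, i.e. for every x ∈ p⁻¹(Γ') there exists u ∈ p⁻¹(Γ') with φ(x) = u x u⁻¹. Then φ is class-preserving by elements of Ḡ: for every x ∈ G there exists h ∈ Ḡ = ker p with φ(x) = h x h⁻¹. -/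
/-- Let `1 → Ḡ → G → Γ → 1` be an exact sequence of profinite groups
(`p : G → Γ` a continuous surjective homomorphism of profinite groups with kernel `Ḡ`),
and let `φ` be a continuous automorphism of `G` with `p ∘ φ = p`.  If for every open
subgroup `Γ' ⊆ Γ` the automorphism of `p⁻¹(Γ')` induced by `φ` is class-preserving,
then `φ` is class-preserving by elements of `Ḡ = ker p`. -/
theorem stmt_0 {G Γ : Type*}
    [Group G] [TopologicalSpace G] [IsTopologicalGroup G]
    [CompactSpace G] [T2Space G] [TotallyDisconnectedSpace G]
    [Group Γ] [TopologicalSpace Γ] [IsTopologicalGroup Γ]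
    [CompactSpace Γ] [T2Space Γ] [TotallyDisconnectedSpace Γ]
    (p : G →* Γ) (hp_cont : Continuous p) (hp_surj : Function.Surjective p)
    (φ : G →* G) (hφ_cont : Continuous φ) (hφ_bij : Function.Bijective φ)
    (hpφ : ∀ g : G, p (φ g) = p g)
    (hcp : ∀ Γ' : Subgroup Γ, IsOpen (Γ' : Set Γ) →
      ∀ x ∈ Γ'.comap p, ∃ u ∈ Γ'.comap p, φ x = u * x * u⁻¹) :
    ∀ x : G, ∃ h ∈ p.ker, φ x = h * x * h⁻¹ := by
  intro x
  -- The family of candidate conjugators, indexed by open normal subgroups of Γ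
  set F : OpenNormalSubgroup Γ → Set G :=
    fun N => {h : G | φ x = h * x * h⁻¹ ∧ p h ∈ N} with hF
  -- each F N is nonempty
  have hne : ∀ N : OpenNormalSubgroup Γ, (F N).Nonempty := by
    intro N
    set Γ'' : Subgroup Γ := Subgroup.zpowers (p x) ⊔ N.toSubgroup with hΓ''
    have hopen : IsOpen (Γ'' : Set Γ) :=
      Subgroup.isOpen_mono (le_sup_right : N.toSubgroup ≤ Γ'') N.isOpen
    have hx : x ∈ Γ''.comap p := by
      exact Subgroup.mem_comap.2 (Subgroup.mem_sup_left (Subgroup.mem_zpowers _))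
    obtain ⟨u, hu, hux⟩ := hcp Γ'' hopen x hx
    have hu' : p u ∈ (↑(Subgroup.zpowers (p x) ⊔ N.toSubgroup) : Set Γ) :=
      Subgroup.mem_comap.1 hu
    rw [Subgroup.mul_normal] at hu'
    obtain ⟨k, hk, t, ht, hkt⟩ := hu'
    obtain ⟨m, hm⟩ := Subgroup.mem_zpowers_iff.1 hk
    refine ⟨u * (x ^ m)⁻¹, ?_, ?_⟩
    · rw [hux]; group
    · have hp' : p (u * (x ^ m)⁻¹) = (p x) ^ m * t * ((p x) ^ m)⁻¹ := by
        rw [map_mul, map_inv, map_zpow, ← hkt, hm]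
      rw [hp']
      exact N.isNormal'.conj_mem t ht _
  -- each F N is closed
  have hcl : ∀ N : OpenNormalSubgroup Γ, IsClosed (F N) := by
    intro N
    have h1 : IsClosed {h : G | φ x = h * x * h⁻¹} :=
      isClosed_eq continuous_const (by fun_prop)
    have h2 : IsClosed (p ⁻¹' (N : Set Γ)) :=
      (OpenSubgroup.isClosed N.toOpenSubgroup).preimage hp_cont
    exact h1.inter h2
  -- the family is directed under ⊇
  have hdir : Directed (· ⊇ ·) F := by
    intro N₁ N₂
    exact ⟨N₁ ⊓ N₂, fun h hh => ⟨hh.1, hh.2.1⟩, fun h hh => ⟨hh.1, hh.2.2⟩⟩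
  let Ntop : OpenNormalSubgroup Γ := ⟨⟨⊤, isOpen_univ⟩, inferInstance⟩
  haveI : Nonempty (OpenNormalSubgroup Γ) := ⟨Ntop⟩
  obtain ⟨h, hh⟩ := IsCompact.nonempty_iInter_of_directed_nonempty_isCompact_isClosed
    F hdir hne (fun N => (hcl N).isCompact) hcl
  have hhN : ∀ N : OpenNormalSubgroup Γ, h ∈ F N := by
    simpa [Set.mem_iInter] using hh
  refine ⟨h, ?_, (hhN Ntop).1⟩
  -- p h lies in every open normal subgroup, hence is trivial
  rw [MonoidHom.mem_ker]
  by_contra hne1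
  obtain ⟨W, hW, h1W, hγW⟩ := exists_isClopen_of_totally_separated (Ne.symm hne1)
  obtain ⟨N, hN⟩ := IsTopologicalGroup.exist_openNormalSubgroup_sub_clopen_nhds_of_one hW h1W
  exact hγW (hN (hhN N).2)
end

section
/- Let f : Y → X be a morphism of schemes which is an immersion (a composite of a closed immersion followed by an open immersion), and assume that X is reduced and that f is surjective on underlying topological spaces. Then f is an isomorphism of schemes. -/
open CategoryTheory AlgebraicGeometry

/-- An immersion of schemes (a composite of a closed immersion followed
by an open immersion) which is surjective on underlying topological spaces and whose
target is reduced is an isomorphism. -/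
theorem stmt_8 {X Y : Scheme} (f : Y ⟶ X) [IsReduced X]
    (himm : ∃ (Z : Scheme) (g : Y ⟶ Z) (h : Z ⟶ X),
      IsClosedImmersion g ∧ IsOpenImmersion h ∧ f = g ≫ h)
    (hsurj : Function.Surjective f.base) :
    IsIso f := by
  obtain ⟨Z, g, h, hg, hh, rfl⟩ := himm
  have hsurjh : Function.Surjective h.base := by
    intro x
    obtain ⟨y, hy⟩ := hsurj x
    exact ⟨g.base y, by simpa using hy⟩
  have : Surjective h := ⟨hsurjh⟩
  have : IsIso h := by
    rw [← MorphismProperty.isomorphisms.iff,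
      isomorphisms_eq_isOpenImmersion_inf_surjective]
    exact ⟨hh, this⟩
  have : Surjective g := by
    constructor
    intro z
    obtain ⟨y, hy⟩ := hsurj (h.base z)
    refine ⟨y, ?_⟩
    have : Function.Injective h.base := hh.base_open.injective
    apply this
    simpa using hy
  have : IsReduced Z := isReduced_of_isOpenImmersion h
  have : IsIso g := isIso_of_isClosedImmersion_of_surjective g
  exact IsIso.comp_isIso
end
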